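/- Under the k-means setup with ground-truth clusters U_r = C⁻¹(r) of size ≥ w·m, Δμ = min_{r≠s}‖μ_r − μ_s‖₂ > 0, and suppose for each r the nearest optimal center μ̂_r (after relabeling) satisfies ‖μ̂_r − μ_r‖₂ ≤ 0.1Δμ. Then the number of misclassified points in cluster r satisfies |U_r \ Ĉ⁻¹(r)| ≤ 5‖B − M‖_F²/Δμ², where Ĉ is the optimal k-means labeling and M has rows μ_{C(i)}. -/

import Mathlib

/-!
If a point of cluster `r` is assigned to `s ≠ r` by the optimal labelling, the centres `μ_r` and
`μ̂_s` are at least `0.9Δ` apart, so the point's squared distances to them add up to at least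
`(0.9Δ)² / 2`. Summing over the misclassified points bounds their number times `0.405 Δ²` by the
ground-truth cost `‖B - M‖_F²` plus the optimal cost; the latter is at most the former since
`(μ, C)` is a competitor, and `2 / 0.405 < 5`.
-/

/-- Frobenius norm of a real matrix. -/
noncomputable def frobNorm {m n : ℕ} (A : Matrix (Fin m) (Fin n) ℝ) : ℝ :=
  Real.sqrt (∑ i, ∑ j, (A i j) ^ 2)

/-- The `i`-th row of a matrix, viewed as a vector in Euclidean space. -/
def row {m n : ℕ} (A : Matrix (Fin m) (Fin n) ℝ) (i : Fin m) : EuclideanSpace ℝ (Fin n) :=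
  WithLp.toLp 2 (fun j => A i j)

open Finset

lemma frobNorm_sq_eq_sum_norm_row_sq {m n : ℕ} (A : Matrix (Fin m) (Fin n) ℝ) :
    frobNorm A ^ 2 = ∑ i, ‖row A i‖ ^ 2 := by
  rw [frobNorm, Real.sq_sqrt (by positivity)]
  exact sum_congr rfl fun i _ => (EuclideanSpace.real_norm_sq_eq (row A i)).symm

lemma row_sub {m n : ℕ} (A B : Matrix (Fin m) (Fin n) ℝ) (i : Fin m) :
    row (A - B) i = row A i - row B i :=
  rfl

section Misclassification

variable {ι κ E : Type*} [Fintype ι] [DecidableEq κ] [SeminormedAddCommGroup E]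

lemma norm_sub_sq_le_two_mul_add (a b c : E) :
    ‖a - c‖ ^ 2 ≤ 2 * (‖a - b‖ ^ 2 + ‖b - c‖ ^ 2) :=
  calc ‖a - c‖ ^ 2 ≤ (‖a - b‖ + ‖b - c‖) ^ 2 := by
        gcongr; exact norm_sub_le_norm_sub_add_norm_sub a b c
    _ ≤ 2 * (‖a - b‖ ^ 2 + ‖b - c‖ ^ 2) := add_sq_le

theorem card_misclassified_mul_sq_le (x : ι → E) (C Chat : ι → κ) (μ μhat : κ → E) (r : κ)
    {d : ℝ} (hd : 0 ≤ d) (hsep : ∀ s ≠ r, d ≤ ‖μ r - μhat s‖) :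
    (#{i | C i = r ∧ Chat i ≠ r} : ℝ) * d ^ 2
      ≤ 2 * (∑ i, ‖x i - μ (C i)‖ ^ 2 + ∑ i, ‖x i - μhat (Chat i)‖ ^ 2) := by
  set S : Finset ι := {i | C i = r ∧ Chat i ≠ r}
  have hpoint : ∀ i ∈ S, d ^ 2 ≤ 2 * (‖x i - μ (C i)‖ ^ 2 + ‖x i - μhat (Chat i)‖ ^ 2) := by
    intro i hi
    obtain ⟨hCi, hChati⟩ := (mem_filter.mp hi).2
    calc d ^ 2 ≤ ‖μ r - μhat (Chat i)‖ ^ 2 := by gcongr; exact hsep _ hChati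
      _ ≤ 2 * (‖μ r - x i‖ ^ 2 + ‖x i - μhat (Chat i)‖ ^ 2) := norm_sub_sq_le_two_mul_add _ _ _
      _ = 2 * (‖x i - μ (C i)‖ ^ 2 + ‖x i - μhat (Chat i)‖ ^ 2) := by rw [norm_sub_rev, hCi]
  calc (#S : ℝ) * d ^ 2 = #S • d ^ 2 := (nsmul_eq_mul _ _).symm
    _ ≤ ∑ i ∈ S, 2 * (‖x i - μ (C i)‖ ^ 2 + ‖x i - μhat (Chat i)‖ ^ 2) :=
        card_nsmul_le_sum _ _ _ hpoint
    _ ≤ ∑ i, 2 * (‖x i - μ (C i)‖ ^ 2 + ‖x i - μhat (Chat i)‖ ^ 2) :=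
        sum_le_sum_of_subset_of_nonneg (subset_univ S) fun i _ _ => by positivity
    _ = 2 * (∑ i, ‖x i - μ (C i)‖ ^ 2 + ∑ i, ‖x i - μhat (Chat i)‖ ^ 2) := by
        rw [← mul_sum, sum_add_distrib]

end Misclassification

theorem kmeans_misclassification_general {m n k : ℕ}
    (C : Fin m → Fin k)
    (μ : Fin k → EuclideanSpace ℝ (Fin n)) (B : Matrix (Fin m) (Fin n) ℝ)
    (Δ : ℝ) (hΔ : 0 < Δ)
    (hsep : ∀ r s : Fin k, r ≠ s → Δ ≤ ‖μ r - μ s‖)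
    (μhat : Fin k → EuclideanSpace ℝ (Fin n)) (Chat : Fin m → Fin k)
    (hopt : ∀ (μ' : Fin k → EuclideanSpace ℝ (Fin n)) (C' : Fin m → Fin k),
      ∑ i, ‖row B i - μhat (Chat i)‖ ^ 2 ≤ ∑ i, ‖row B i - μ' (C' i)‖ ^ 2)
    (herr : ∀ r : Fin k, ‖μhat r - μ r‖ ≤ 0.1 * Δ)
    (M : Matrix (Fin m) (Fin n) ℝ) (hM : ∀ i j, M i j = μ (C i) j) :
    ∀ r : Fin k,
      (((Finset.univ.filter fun i => C i = r ∧ Chat i ≠ r).card : ℝ))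
        ≤ 5 * frobNorm (B - M) ^ 2 / Δ ^ 2 := by
  intro r
  have hfrob : frobNorm (B - M) ^ 2 = ∑ i, ‖row B i - μ (C i)‖ ^ 2 := by
    rw [frobNorm_sq_eq_sum_norm_row_sq]
    exact sum_congr rfl fun i _ => by rw [row_sub]; congr; ext j; exact hM i j
  have hcenters : ∀ s ≠ r, 0.9 * Δ ≤ ‖μ r - μhat s‖ := fun s hs => by
    linarith [hsep r s hs.symm, herr s, norm_sub_le_norm_sub_add_norm_sub (μ r) (μhat s) (μ s)]
  have hcount := card_misclassified_mul_sq_le (row B) C Chat μ μhat r (by positivity) hcenters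
  have hOPT := hopt μ C
  rw [hfrob, le_div_iff₀ (by positivity)]
  nlinarith [sq_nonneg Δ, Nat.cast_nonneg (α := ℝ) (#{i | C i = r ∧ Chat i ≠ r})]

theorem kmeans_misclassification {m n k : ℕ}
    (C : Fin m → Fin k) (w : ℝ) (hw : 0 < w)
    (hsize : ∀ r : Fin k, w * m ≤ ((Finset.univ.filter fun i => C i = r).card : ℝ))
    (μ : Fin k → EuclideanSpace ℝ (Fin n)) (B : Matrix (Fin m) (Fin n) ℝ)
    (Δ : ℝ) (hΔ : 0 < Δ)
    (hsep : ∀ r s : Fin k, r ≠ s → Δ ≤ ‖μ r - μ s‖)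
    (μhat : Fin k → EuclideanSpace ℝ (Fin n)) (Chat : Fin m → Fin k)
    (hopt : ∀ (μ' : Fin k → EuclideanSpace ℝ (Fin n)) (C' : Fin m → Fin k),
      ∑ i, ‖row B i - μhat (Chat i)‖ ^ 2 ≤ ∑ i, ‖row B i - μ' (C' i)‖ ^ 2)
    (herr : ∀ r : Fin k, ‖μhat r - μ r‖ ≤ 0.1 * Δ)
    (M : Matrix (Fin m) (Fin n) ℝ) (hM : ∀ i j, M i j = μ (C i) j) :
    ∀ r : Fin k,
      (((Finset.univ.filter fun i => C i = r ∧ Chat i ≠ r).card : ℝ))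
        ≤ 5 * frobNorm (B - M) ^ 2 / Δ ^ 2 :=
  kmeans_misclassification_general C μ B Δ hΔ hsep μhat Chat hopt herr M hM
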